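/- arXiv:1101.4439 — 5 statements merged into one kernel-verified Lean document; each statement's English description precedes it below -/
import Mathlib

section
/- Let x₁,…,x_m ∈ X be pairwise distinct and suppose the matrix K[x] is invertible and ‖K[x]^{-1} K_x(x)‖₁ ≤ 1 for all x ∈ X. Then for every c ∈ ℝ^m, sup_{x∈X} |Σ_{j=1}^m c_j K(x,x_j)| = ‖c^T K[x]‖_∞, i.e., the supremum over X of |Σ_j c_j K(x,x_j)| equals max_{k=1,…,m} |Σ_{j=1}^m c_j K(x_k,x_j)|. -/
/-!
Writing `K_x(x) = K[x] a(x)` with `a(x) := K[x]⁻¹ K_x(x)` gives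
`∑ⱼ cⱼ K(x,xⱼ) = (cᵀ K[x]) ⬝ a(x)`, which Hölder bounds by `‖cᵀ K[x]‖_∞ ‖a(x)‖₁ ≤ ‖cᵀ K[x]‖_∞`.
At the nodes `x = x_k` the sum is `(cᵀ K[x])_k`, so the bound is attained.
-/

open MeasureTheory Matrix

theorem Matrix.dotProduct_eq_vecMul_dotProduct_inv_mulVec {n R : Type*} [Fintype n]
    [DecidableEq n] [CommRing R] (A : Matrix n n R) (hA : IsUnit A.det) (c v : n → R) :
    c ⬝ᵥ v = c ᵥ* A ⬝ᵥ A⁻¹ *ᵥ v := by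
  rw [dotProduct_mulVec, vecMul_vecMul, mul_nonsing_inv A hA, vecMul_one]

theorem abs_dotProduct_le_iSup_abs_mul_sum_abs {n : Type*} [Fintype n] (u w : n → ℝ) :
    |u ⬝ᵥ w| ≤ (⨆ k, |u k|) * ∑ k, |w k| := by
  have hbdd : BddAbove (Set.range fun k => |u k|) := (Set.finite_range _).bddAbove
  calc |u ⬝ᵥ w| ≤ ∑ k, |u k| * |w k| := by
        simpa only [dotProduct, abs_mul] using
          Finset.abs_sum_le_sum_abs (fun k => u k * w k) Finset.univ
    _ ≤ ∑ k, (⨆ i, |u i|) * |w k| := by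
        gcongr with k
        exact le_ciSup hbdd k
    _ = (⨆ k, |u k|) * ∑ k, |w k| := (Finset.mul_sum _ _ _).symm

namespace ZeroAtInftyContinuousMap

theorem sum_smul_apply {X β R ι : Type*} [TopologicalSpace X] [TopologicalSpace β]
    [AddCommMonoid β] [ContinuousAdd β] [Semiring R] [Module R β] [ContinuousConstSMul R β]
    (s : Finset ι) (c : ι → R) (g : ι → ZeroAtInftyContinuousMap X β) (x : X) :
    (∑ j ∈ s, c j • g j) x = ∑ j ∈ s, c j • g j x := by
  induction s using Finset.cons_induction with
  | empty => simp
  | cons i s hi ih => simp [Finset.sum_cons, ih]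

theorem norm_eq_iSup_of_forall_norm_le {X E ι : Type*} [TopologicalSpace X]
    [SeminormedAddCommGroup E] [Finite ι] (f : ZeroAtInftyContinuousMap X E) (p : ι → X)
    (h : ∀ x, ‖f x‖ ≤ ⨆ k, ‖f (p k)‖) : ‖f‖ = ⨆ k, ‖f (p k)‖ := by
  rw [← norm_toBCF_eq_norm]
  exact le_antisymm
    ((BoundedContinuousFunction.norm_le (Real.iSup_nonneg fun _ => norm_nonneg _)).mpr h)
    (Real.iSup_le (fun k => f.toBCF.norm_coe_le_norm (p k)) (norm_nonneg _))

end ZeroAtInftyContinuousMap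

/-- `K x` is the function `t ↦ K(t,x)`, so `Kmat` is `K[x]` and the right-hand side is
`‖cᵀ K[x]‖_∞`. -/
theorem stmt3_general {X : Type*} [TopologicalSpace X]
    (K : X → ZeroAtInftyContinuousMap X ℝ)
    (m : ℕ) (xs : Fin m → X)
    (Kmat : Matrix (Fin m) (Fin m) ℝ)
    (hKmat : ∀ j k, Kmat j k = (K (xs j)) (xs k))
    (hinv : IsUnit Kmat.det)
    (hH2 : ∀ x : X, ∑ j, |(Kmat⁻¹ *ᵥ fun j => (K (xs j)) x) j| ≤ 1)
    (c : Fin m → ℝ) :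
    ‖∑ j, c j • K (xs j)‖ = ⨆ k : Fin m, |∑ j, c j * Kmat j k| := by
  set f := ∑ j, c j • K (xs j)
  have hf : ∀ x, f x = c ⬝ᵥ fun j => K (xs j) x := fun x => by
    simp only [f, ZeroAtInftyContinuousMap.sum_smul_apply, smul_eq_mul, dotProduct]
  have hnodes : ∀ k, ‖f (xs k)‖ = |∑ j, c j * Kmat j k| := by
    simp only [hf, Real.norm_eq_abs, dotProduct, hKmat, implies_true]
  simp only [← hnodes]
  refine f.norm_eq_iSup_of_forall_norm_le xs fun x => ?_
  rw [hf, Kmat.dotProduct_eq_vecMul_dotProduct_inv_mulVec hinv, Real.norm_eq_abs]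
  simp only [hnodes]
  calc _ ≤ (⨆ k, |(c ᵥ* Kmat) k|) * ∑ k, |(Kmat⁻¹ *ᵥ fun j => K (xs j) x) k| :=
        abs_dotProduct_le_iSup_abs_mul_sum_abs _ _
    _ ≤ (⨆ k, |(c ᵥ* Kmat) k|) * 1 := by
        gcongr
        · exact Real.iSup_nonneg fun _ => abs_nonneg _
        · exact hH2 x
    _ = _ := mul_one _

/-- let `x₁,…,x_m` be pairwise distinct, `K[x]` (with entries
`(K[x])_{j,k} = K(x_k,x_j)`) invertible, and `‖K[x]⁻¹ K_x(x)‖₁ ≤ 1` for all `x ∈ X`.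
Then for every `c ∈ ℝ^m`, `sup_{x∈X} |Σ_j c_j K(x,x_j)| = ‖c^T K[x]‖_∞`.
Here `K x : C₀(X,ℝ)` is the function `t ↦ K(t,x)`, so the left-hand side is the
`C₀`-norm of `Σ_j c_j K(·,x_j)` and `(c^T K[x])_k = Σ_j c_j K(x_k,x_j)`. -/
theorem stmt3 {X : Type*} [TopologicalSpace X] [LocallyCompactSpace X] [T2Space X]
    (K : X → ZeroAtInftyContinuousMap X ℝ)
    (m : ℕ) (hm : 0 < m) (xs : Fin m → X) (hxs : Function.Injective xs)
    (Kmat : Matrix (Fin m) (Fin m) ℝ)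
    (hKmat : ∀ j k, Kmat j k = (K (xs j)) (xs k))
    (hinv : IsUnit Kmat.det)
    (hH2 : ∀ x : X, ∑ j, |(Kmat⁻¹ *ᵥ fun j => (K (xs j)) x) j| ≤ 1)
    (c : Fin m → ℝ) :
    ‖∑ j, c j • K (xs j)‖ = ⨆ k : Fin m, |∑ j, c j * Kmat j k| :=
  stmt3_general K m xs Kmat hKmat hinv hH2 c
end

section
/- Suppose K(·,x) ∈ C₀(X) for every x ∈ X and span{K(·,x) : x ∈ X} is dense in C₀(X). Let x₁,…,x_m ∈ X be pairwise distinct, suppose K[x] is invertible and ‖K[x]^{-1} K_x(x)‖₁ ≤ 1 for all x ∈ X. Let y ∈ ℝ^m and set c₀ := K[x]^{-1} y. Then: (i) every μ ∈ M(X) satisfying the interpolation conditions f_μ(x_j) = y_j for all j = 1,…,m has total variation ‖μ‖ ≥ ‖c₀‖₁; (ii) the discrete measure μ₀ := Σ_{j=1}^m (c₀)_j δ_{x_j} interpolates, f_{μ₀}(x_j) = y_j for all j, and has ‖μ₀‖ = ‖c₀‖₁. Hence μ₀ is a minimizer of the minimal norm interpolation problem inf{‖μ‖ : μ ∈ M(X),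 f_μ(x_j) = y_j for all j}. -/
open MeasureTheory Matrix

/-- The integral of a function against a finite signed Borel measure,
defined via the Jordan decomposition. -/
noncomputable def sintegral {X : Type*} [MeasurableSpace X]
    (μ : SignedMeasure X) (f : X → ℝ) : ℝ :=
  (∫ t, f t ∂μ.toJordanDecomposition.posPart) - ∫ t, f t ∂μ.toJordanDecomposition.negPart

/-- The total variation norm of a finite signed Borel measure. -/
noncomputable def tvNorm {X : Type*} [MeasurableSpace X] (μ : SignedMeasure X) : ℝ :=
  (μ.totalVariation Set.univ).toReal

/-- The Dirac measure at a point, as a signed measure. -/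
noncomputable def diracSM {X : Type*} [MeasurableSpace X] (x : X) : SignedMeasure X :=
  (Measure.dirac x).toSignedMeasure

/-! Lower bound by duality: if `ε` is the sign vector of `c₀ = K[x]⁻¹ y`, the function
`h = Σⱼ (εᵀ K[x]⁻¹)ⱼ K(·, xⱼ)` satisfies `h(x) = ε ⬝ K[x]⁻¹ K_x(x)`, hence `|h| ≤ 1`, and for an
interpolating `μ` one gets `‖c₀‖₁ = ε ⬝ c₀ = ∫ h dμ ≤ ‖μ‖`. The discrete measure `μ₀` interpolates
because `K[x] c₀ = y`, and splitting `c₀` into positive and negative parts gives `‖μ₀‖ ≤ ‖c₀‖₁`;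
the reverse inequality is the lower bound applied to `μ₀`. -/

open scoped BoundedContinuousFunction

lemma abs_dotProduct_le_sum_abs {ι : Type*} [Fintype ι] {ε : ι → ℝ} (hε : ∀ i, |ε i| ≤ 1)
    (v : ι → ℝ) : |ε ⬝ᵥ v| ≤ ∑ i, |v i| :=
  (Finset.abs_sum_le_sum_abs _ _).trans <| Finset.sum_le_sum fun i _ => by
    rw [abs_mul]; exact mul_le_of_le_one_left (abs_nonneg _) (hε i)

namespace MeasureTheory

lemma Measure.toSignedMeasure_finsetSum {X ι : Type*} [MeasurableSpace X] (s : Finset ι)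
    (μ : ι → Measure X) [∀ i, IsFiniteMeasure (μ i)] :
    (∑ i ∈ s, μ i).toSignedMeasure = ∑ i ∈ s, (μ i).toSignedMeasure := by
  classical
  induction s using Finset.induction_on with
  | empty => simp
  | insert i s hi ih => simp only [Finset.sum_insert hi]; rw [Measure.toSignedMeasure_add, ih]

section SignedMeasure

variable {X : Type*} [MeasurableSpace X]

lemma tvNorm_eq_posPart_add_negPart (μ : SignedMeasure X) :
    tvNorm μ = μ.toJordanDecomposition.posPart.real Set.univ
      + μ.toJordanDecomposition.negPart.real Set.univ := by
  rw [tvNorm, SignedMeasure.totalVariation, Measure.add_apply,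
    ENNReal.toReal_add (measure_ne_top _ _) (measure_ne_top _ _)]
  rfl

variable (P N : Measure X) [IsFiniteMeasure P] [IsFiniteMeasure N]

lemma tvNorm_toSignedMeasure_sub_le :
    tvNorm (P.toSignedMeasure - N.toSignedMeasure) ≤ P.real Set.univ + N.real Set.univ := by
  rw [tvNorm_eq_posPart_add_negPart, Measure.toJordanDecomposition_toSignedMeasure_sub]
  exact add_le_add (ENNReal.toReal_mono (measure_ne_top _ _) (Measure.sub_le Set.univ))
    (ENNReal.toReal_mono (measure_ne_top _ _) (Measure.sub_le Set.univ))

lemma posPart_add_eq_add_negPart_toSignedMeasure_sub :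
    (P.toSignedMeasure - N.toSignedMeasure).toJordanDecomposition.posPart + N
      = P + (P.toSignedMeasure - N.toSignedMeasure).toJordanDecomposition.negPart := by
  refine Measure.toSignedMeasure_eq_toSignedMeasure_iff.mp ?_
  rw [Measure.toSignedMeasure_add, Measure.toSignedMeasure_add, ← sub_eq_sub_iff_add_eq_add]
  exact SignedMeasure.toSignedMeasure_toJordanDecomposition _

end SignedMeasure

section Integral

variable {X : Type*} [TopologicalSpace X] [MeasurableSpace X] [OpensMeasurableSpace X]

noncomputable def sintegralₗ (μ : SignedMeasure X) : (X →ᵇ ℝ) →ₗ[ℝ] ℝ where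
  toFun f := sintegral μ f
  map_add' f g := by
    simp only [sintegral, BoundedContinuousFunction.coe_add, Pi.add_apply,
      integral_add (f.integrable _) (g.integrable _)]
    ring
  map_smul' c f := by
    simp only [sintegral, BoundedContinuousFunction.coe_smul, smul_eq_mul, integral_const_mul,
      RingHom.id_apply, mul_sub]

lemma sintegralₗ_apply (μ : SignedMeasure X) (f : X →ᵇ ℝ) : sintegralₗ μ f = sintegral μ f := rfl

lemma abs_sintegral_le (μ : SignedMeasure X) (f : X →ᵇ ℝ) :
    |sintegral μ f| ≤ ‖f‖ * tvNorm μ := by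
  rw [sintegral, tvNorm_eq_posPart_add_negPart, mul_add]
  refine (abs_sub _ _).trans (add_le_add ?_ ?_) <;>
    simpa only [mul_comm ‖f‖, Real.norm_eq_abs] using f.norm_integral_le_mul_norm _

lemma sintegral_toSignedMeasure_sub (P N : Measure X) [IsFiniteMeasure P] [IsFiniteMeasure N]
    (f : X →ᵇ ℝ) :
    sintegral (P.toSignedMeasure - N.toSignedMeasure) f = (∫ t, f t ∂P) - ∫ t, f t ∂N := by
  have h := congrArg (fun ν : Measure X => ∫ t, f t ∂ν)
    (posPart_add_eq_add_negPart_toSignedMeasure_sub P N)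
  simp only [integral_add_measure (f.integrable _) (f.integrable _)] at h
  rw [sintegral]
  linarith

end Integral

section Discrete

variable {X ι : Type*} [MeasurableSpace X] (s : Finset ι) (c : ι → ℝ) (x : ι → X)

lemma sum_smul_diracSM_eq_toSignedMeasure_sub :
    ∑ k ∈ s, c k • diracSM (x k)
      = (∑ k ∈ s, (c k).toNNReal • Measure.dirac (x k)).toSignedMeasure
        - (∑ k ∈ s, (-c k).toNNReal • Measure.dirac (x k)).toSignedMeasure := by
  rw [Measure.toSignedMeasure_finsetSum, Measure.toSignedMeasure_finsetSum,
    ← Finset.sum_sub_distrib]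
  refine Finset.sum_congr rfl fun k _ => ?_
  rw [Measure.toSignedMeasure_smul, Measure.toSignedMeasure_smul, NNReal.smul_def,
    NNReal.smul_def, diracSM, ← sub_smul (M := SignedMeasure X), Real.coe_toNNReal',
    Real.coe_toNNReal', max_zero_sub_max_neg_zero_eq_self]

lemma tvNorm_sum_smul_diracSM_le : tvNorm (∑ k ∈ s, c k • diracSM (x k)) ≤ ∑ k ∈ s, |c k| := by
  rw [sum_smul_diracSM_eq_toSignedMeasure_sub]
  refine (tvNorm_toSignedMeasure_sub_le _ _).trans_eq ?_
  simp only [measureReal_def, Measure.coe_finsetSum, Finset.sum_apply, Measure.smul_apply,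
    measure_univ]
  rw [ENNReal.toReal_sum (fun _ _ => by simp), ENNReal.toReal_sum (fun _ _ => by simp),
    ← Finset.sum_add_distrib]
  simp only [ENNReal.smul_one, ENNReal.coe_toReal, Real.coe_toNNReal',
    max_zero_add_max_neg_zero_eq_abs_self]

lemma sintegral_sum_smul_diracSM [TopologicalSpace X] [OpensMeasurableSpace X] (f : X →ᵇ ℝ) :
    sintegral (∑ k ∈ s, c k • diracSM (x k)) f = ∑ k ∈ s, c k * f (x k) := by
  rw [sum_smul_diracSM_eq_toSignedMeasure_sub, sintegral_toSignedMeasure_sub,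
    integral_finsetSum_measure fun k _ => f.integrable _,
    integral_finsetSum_measure fun k _ => f.integrable _, ← Finset.sum_sub_distrib]
  refine Finset.sum_congr rfl fun k _ => ?_
  simp only [integral_smul_nnreal_measure, integral_dirac' _ _ f.continuous.stronglyMeasurable,
    NNReal.smul_def, smul_eq_mul, ← sub_mul, Real.coe_toNNReal', max_zero_sub_max_neg_zero_eq_self]

end Discrete

theorem sum_abs_mulVec_sintegral_le_tvNorm {X ι κ : Type*} [TopologicalSpace X]
    [MeasurableSpace X] [OpensMeasurableSpace X] [Fintype ι] [Fintype κ]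
    (B : Matrix ι κ ℝ) (k : κ → X →ᵇ ℝ) (hB : ∀ x, ∑ i, |(B *ᵥ fun j => k j x) i| ≤ 1)
    (μ : SignedMeasure X) :
    ∑ i, |(B *ᵥ fun j => sintegral μ (k j)) i| ≤ tvNorm μ := by
  set v := B *ᵥ fun j => sintegral μ (k j)
  set ε : ι → ℝ := fun i => SignType.sign (v i)
  have hε : ∀ i, |ε i| ≤ 1 := fun i => by
    simp only [ε]
    generalize SignType.sign (v i) = σ
    cases σ <;> simp
  set h : X →ᵇ ℝ := ∑ j, (ε ᵥ* B) j • k j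
  have hv : ∑ i, |v i| = sintegral μ h :=
    calc ∑ i, |v i| = ε ⬝ᵥ v := by simp only [dotProduct, ε, sign_mul_self]
      _ = (ε ᵥ* B) ⬝ᵥ fun j => sintegral μ (k j) := dotProduct_mulVec _ _ _
      _ = sintegral μ h := by
        simp only [h, ← sintegralₗ_apply, map_sum, map_smul, dotProduct, smul_eq_mul]
  have hh : ‖h‖ ≤ 1 := (BoundedContinuousFunction.norm_le zero_le_one).2 fun x => by
    have hx : h x = (ε ᵥ* B) ⬝ᵥ fun j => k j x := by simp [h, dotProduct]
    rw [Real.norm_eq_abs, hx, ← dotProduct_mulVec]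
    exact (abs_dotProduct_le_sum_abs hε _).trans (hB x)
  calc ∑ i, |v i| = sintegral μ h := hv
    _ ≤ |sintegral μ h| := le_abs_self _
    _ ≤ ‖h‖ * tvNorm μ := abs_sintegral_le μ h
    _ ≤ tvNorm μ := mul_le_of_le_one_left ENNReal.toReal_nonneg hh

end MeasureTheory

theorem stmt4_general {X : Type*} [TopologicalSpace X]
    [MeasurableSpace X] [BorelSpace X]
    (K : X → ZeroAtInftyContinuousMap X ℝ)
    (m : ℕ) (xs : Fin m → X)
    (Kmat : Matrix (Fin m) (Fin m) ℝ)
    (hKmat : ∀ j k, Kmat j k = (K (xs j)) (xs k))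
    (hinv : IsUnit Kmat.det)
    (hH2 : ∀ x : X, ∑ j, |(Kmat⁻¹ *ᵥ fun j => (K (xs j)) x) j| ≤ 1)
    (y : Fin m → ℝ) :
    (∀ μ : SignedMeasure X, μ.totalVariation.Regular →
      (∀ j, sintegral μ (K (xs j)) = y j) →
      ∑ j, |(Kmat⁻¹ *ᵥ y) j| ≤ tvNorm μ) ∧
    (∀ j, sintegral (∑ k, (Kmat⁻¹ *ᵥ y) k • diracSM (xs k)) (K (xs j)) = y j) ∧
    tvNorm (∑ k, (Kmat⁻¹ *ᵥ y) k • diracSM (xs k)) = ∑ j, |(Kmat⁻¹ *ᵥ y) j| := by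
  set c := Kmat⁻¹ *ᵥ y
  have lower : ∀ μ : SignedMeasure X, (∀ j, sintegral μ (K (xs j)) = y j) →
      ∑ j, |c j| ≤ tvNorm μ := fun μ hμ => by
    have h := sum_abs_mulVec_sintegral_le_tvNorm Kmat⁻¹ (fun j => (K (xs j)).toBCF) hH2 μ
    rwa [show (fun j => sintegral μ (K (xs j)).toBCF) = y from funext hμ] at h
  have interp : ∀ j, sintegral (∑ k, c k • diracSM (xs k)) (K (xs j)) = y j := fun j =>
    calc sintegral (∑ k, c k • diracSM (xs k)) (K (xs j))
        = (Kmat *ᵥ c) j := by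
          change sintegral _ (K (xs j)).toBCF = _
          rw [sintegral_sum_smul_diracSM]
          exact Finset.sum_congr rfl fun k _ => by
            rw [mul_comm]; exact congrArg (· * c k) (hKmat j k).symm
      _ = y j := by rw [mulVec_mulVec, mul_nonsing_inv _ hinv, one_mulVec]
  exact ⟨fun μ _ => lower μ, interp,
    le_antisymm (tvNorm_sum_smul_diracSM_le _ _ _) (lower _ interp)⟩

/-- under density of `span{K(·,x)}` in `C₀(X)`, invertibility of `K[x]`
(entries `(K[x])_{j,k} = K(x_k,x_j)`) and the condition `‖K[x]⁻¹ K_x(x)‖₁ ≤ 1` for all `x`,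
with `c₀ := K[x]⁻¹ y`: (i) every regular `μ ∈ M(X)` with `f_μ(x_j) = y_j` for all `j` has
`‖μ‖ ≥ ‖c₀‖₁`; (ii) `μ₀ := Σ_j (c₀)_j δ_{x_j}` interpolates and `‖μ₀‖ = ‖c₀‖₁`.
Hence `μ₀` minimizes the minimal norm interpolation problem.
Here `K x : C₀(X,ℝ)` is `t ↦ K(t,x)`, so `f_μ(x_j) = sintegral μ (K (xs j))`. -/
theorem stmt4 {X : Type*} [TopologicalSpace X] [LocallyCompactSpace X] [T2Space X]
    [MeasurableSpace X] [BorelSpace X]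
    (K : X → ZeroAtInftyContinuousMap X ℝ)
    (hdense : Dense (↑(Submodule.span ℝ (Set.range K)) :
      Set (ZeroAtInftyContinuousMap X ℝ)))
    (m : ℕ) (xs : Fin m → X) (hxs : Function.Injective xs)
    (Kmat : Matrix (Fin m) (Fin m) ℝ)
    (hKmat : ∀ j k, Kmat j k = (K (xs j)) (xs k))
    (hinv : IsUnit Kmat.det)
    (hH2 : ∀ x : X, ∑ j, |(Kmat⁻¹ *ᵥ fun j => (K (xs j)) x) j| ≤ 1)
    (y : Fin m → ℝ) :
    (∀ μ : SignedMeasure X, μ.totalVariation.Regular →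
      (∀ j, sintegral μ (K (xs j)) = y j) →
      ∑ j, |(Kmat⁻¹ *ᵥ y) j| ≤ tvNorm μ) ∧
    (∀ j, sintegral (∑ k, (Kmat⁻¹ *ᵥ y) k • diracSM (xs k)) (K (xs j)) = y j) ∧
    tvNorm (∑ k, (Kmat⁻¹ *ᵥ y) k • diracSM (xs k)) = ∑ j, |(Kmat⁻¹ *ᵥ y) j| :=
  stmt4_general K m xs Kmat hKmat hinv hH2 y
end

section
/- Let ν be a finite signed regular Borel measure on the open interval (0,1). If ∫_{(0,1)} (min{s,t} − st) dν(s) = 0 for every t ∈ (0,1), then ν is the zero measure. Consequently, the linear span of {K(·,t) : t ∈ (0,1)}, where K(s,t) := min{s,t} − st is the Brownian bridge kernel, is dense in C₀((0,1)). -/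
open MeasureTheory

/-!
The second differences of the kernel in `t` are tent functions,
`2 K(s, b) - K(s, b - h) - K(s, b + h) = max 0 (h - |s - b|)`, so the span of the sections
`K(·, t)` contains the piecewise linear interpolant of any `f ∈ C₀((0,1))` on the grid `j / n`.
Extended by zero, `f` is uniformly continuous on `ℝ`, and the tents form a partition of unity,
so these interpolants converge to `f` uniformly: the span is dense.

For uniqueness, the two parts of the Jordan decomposition of `ν` are finite, hence regular,
measures on `(0,1)` with the same integrals against every `K(·, t)`. By density they have the same
integrals against every `C₀` function, in particular against every compactly supported one, so
they are equal and `ν = 0`.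
-/

open Filter Topology Finset
open scoped ZeroAtInfty

namespace ZeroAtInftyContinuousMap

variable {X : Type*} [TopologicalSpace X]

theorem continuous_extend_zero {β : Type*} [TopologicalSpace β] [Zero β] [T2Space X]
    {U : Set X} (hU : IsOpen U) (f : C₀(U, β)) :
    Continuous (Function.extend Subtype.val f 0) := by
  rw [continuous_iff_continuousAt]
  intro x
  by_cases hx : x ∈ U
  · lift x to U using hx
    rw [← hU.isOpenEmbedding_subtypeVal.continuousAt_iff,
      Function.extend_comp Subtype.val_injective]
    exact f.continuous.continuousAt
  · have hx0 : Function.extend Subtype.val f 0 x = 0 :=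
      Function.extend_apply' _ _ _ fun ⟨s, hs⟩ => hx (hs ▸ s.2)
    rw [ContinuousAt, hx0]
    intro V hV
    obtain ⟨K, hK, hKV⟩ := hasBasis_cocompact.mem_iff.mp (f.zero_at_infty' hV)
    have hxK : x ∉ Subtype.val '' K := fun ⟨s, _, hs⟩ => hx (hs ▸ s.2)
    refine Filter.mem_map.mpr ?_
    filter_upwards [(hK.image continuous_subtype_val).isClosed.isOpen_compl.mem_nhds hxK]
      with y hy
    by_cases hyU : y ∈ U
    · lift y to U using hyU
      rw [Set.mem_preimage, Subtype.val_injective.extend_apply]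
      exact hKV fun hyK => hy ⟨y, hyK, rfl⟩
    · rw [Set.mem_preimage, Function.extend_apply' _ _ _ fun ⟨s, hs⟩ => hyU (hs ▸ s.2)]
      exact mem_of_mem_nhds hV

theorem sum_apply {β ι : Type*} [TopologicalSpace β] [AddCommMonoid β] [ContinuousAdd β]
    (t : Finset ι) (g : ι → C₀(X, β)) (x : X) : (∑ i ∈ t, g i) x = ∑ i ∈ t, g i x :=
  map_sum (⟨⟨fun g => g x, rfl⟩, fun _ _ => rfl⟩ : C₀(X, β) →+ β) g t

variable [MeasurableSpace X] [OpensMeasurableSpace X]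

noncomputable def integralCLM (μ : Measure X) [IsFiniteMeasure μ] : C₀(X, ℝ) →L[ℝ] ℝ :=
  LinearMap.mkContinuous
    { toFun f := ∫ x, f x ∂μ
      map_add' f g := integral_add (f.toBCF.integrable μ) (g.toBCF.integrable μ)
      map_smul' c f := integral_smul c _ }
    (μ.real Set.univ) fun f => by
      simpa [norm_toBCF_eq_norm] using f.toBCF.norm_integral_le_mul_norm μ

end ZeroAtInftyContinuousMap

theorem MeasureTheory.Measure.ext_of_dense_span_zeroAtInfty {X : Type*} [TopologicalSpace X]
    [T2Space X] [LocallyCompactSpace X] [MeasurableSpace X] [BorelSpace X] {μ ν : Measure X}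
    [IsFiniteMeasure μ] [IsFiniteMeasure ν] [μ.Regular] [ν.Regular] {S : Set C₀(X, ℝ)}
    (hS : Dense (Submodule.span ℝ S : Set C₀(X, ℝ)))
    (h : ∀ f ∈ S, ∫ x, f x ∂μ = ∫ x, f x ∂ν) : μ = ν := by
  have hCLM := ContinuousLinearMap.ext_on hS (f := ZeroAtInftyContinuousMap.integralCLM μ)
    (g := ZeroAtInftyContinuousMap.integralCLM ν) h
  exact Measure.ext_of_integral_eq_on_compactlySupported fun f =>
    congr($hCLM (f : C₀(X, ℝ)))

theorem MeasureTheory.SignedMeasure.eq_zero_of_posPart_eq_negPart {X : Type*}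
    [MeasurableSpace X] (ν : SignedMeasure X)
    (h : ν.toJordanDecomposition.posPart = ν.toJordanDecomposition.negPart) : ν = 0 := by
  rw [← ν.toSignedMeasure_toJordanDecomposition, JordanDecomposition.toSignedMeasure]
  simp only [h, sub_self]

def tent (h b x : ℝ) : ℝ := max 0 (h - |x - b|)

theorem tent_nonneg (h b x : ℝ) : 0 ≤ tent h b x := le_max_left _ _

theorem abs_sub_lt_of_tent_ne_zero {h b x : ℝ} (hx : tent h b x ≠ 0) : |x - b| < h := by
  by_contra! hle
  exact hx (max_eq_left (by linarith))

theorem tent_eq_two_mul_min_sub {h : ℝ} (hh : 0 ≤ h) (b x : ℝ) :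
    tent h b x = 2 * min x b - min x (b - h) - min x (b + h) := by
  unfold tent
  rcases le_total x b with hxb | hxb
  · rw [abs_of_nonpos (by linarith), min_eq_left hxb, min_eq_left (by linarith : x ≤ b + h)]
    rcases le_total x (b - h) with hx | hx
    · rw [min_eq_left hx, max_eq_left (by linarith)]; ring
    · rw [min_eq_right hx, max_eq_right (by linarith)]; ring
  · rw [abs_of_nonneg (by linarith), min_eq_right hxb, min_eq_right (by linarith : b - h ≤ x)]
    rcases le_total x (b + h) with hx | hx
    · rw [min_eq_left hx, max_eq_right (by linarith)]; ring
    · rw [min_eq_right hx, max_eq_left (by linarith)]; ring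

theorem sum_range_tent {h : ℝ} (hh : 0 ≤ h) (N : ℕ) {x : ℝ} (hx0 : 0 ≤ x)
    (hxN : x ≤ N * h) :
    ∑ j ∈ range (N + 1), tent h (j * h) x = h := by
  set D : ℕ → ℝ := fun j => min x (j * h) - min x ((j - 1) * h)
  have hD : ∀ j : ℕ, tent h (j * h) x = D j - D (j + 1) := fun j => by
    simp only [D, tent_eq_two_mul_min_sub hh]
    push_cast
    ring_nf
  have hD0 : D 0 = h := by
    simp only [D, Nat.cast_zero, zero_mul, zero_sub, neg_one_mul]
    rw [min_eq_right hx0, min_eq_right (by linarith)]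
    ring
  have hDN : D (N + 1) = 0 := by
    simp only [D, Nat.cast_add, Nat.cast_one, add_sub_cancel_right]
    rw [min_eq_left hxN, min_eq_left (by nlinarith)]
    ring
  rw [sum_congr rfl fun j _ => hD j, sum_range_sub', hD0, hDN, sub_zero]

theorem abs_sub_sum_mul_le {ι : Type*} {s : Finset ι} {w b : ι → ℝ} {a ε : ℝ}
    (hw : ∀ i ∈ s, 0 ≤ w i) (hw1 : ∑ i ∈ s, w i = 1)
    (hb : ∀ i ∈ s, w i ≠ 0 → |a - b i| ≤ ε) :
    |a - ∑ i ∈ s, w i * b i| ≤ ε := by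
  have hterm : ∀ i ∈ s, w i * |a - b i| ≤ w i * ε := fun i hi => by
    by_cases hwi : w i = 0
    · simp [hwi]
    · exact mul_le_mul_of_nonneg_left (hb i hi hwi) (hw i hi)
  calc |a - ∑ i ∈ s, w i * b i| = |∑ i ∈ s, w i * (a - b i)| := by
        simp only [mul_sub, sum_sub_distrib, ← sum_mul, hw1, one_mul]
    _ ≤ ∑ i ∈ s, w i * |a - b i| := by
        refine (abs_sum_le_sum_abs _ _).trans_eq (sum_congr rfl fun i hi => ?_)
        rw [abs_mul, abs_of_nonneg (hw i hi)]
    _ ≤ ∑ i ∈ s, w i * ε := sum_le_sum hterm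
    _ = ε := by rw [← sum_mul, hw1, one_mul]

namespace BrownianBridge

local notation "𝕀" => Set.Elem (Set.Ioo (0:ℝ) 1)

def bridge (s t : ℝ) : ℝ := min s t - s * t

theorem two_mul_bridge_sub_sub {h : ℝ} (hh : 0 ≤ h) (b x : ℝ) :
    2 * bridge x b - bridge x (b - h) - bridge x (b + h) = tent h b x := by
  rw [tent_eq_two_mul_min_sub hh]
  unfold bridge
  ring

theorem abs_bridge_le {s t : ℝ} (hs : s ∈ Set.Icc (0:ℝ) 1) (ht : t ∈ Set.Icc (0:ℝ) 1) :
    |bridge s t| ≤ min s (1 - s) := by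
  obtain ⟨hs0, hs1⟩ := hs
  obtain ⟨ht0, ht1⟩ := ht
  have hnonneg : 0 ≤ bridge s t := by
    unfold bridge
    rcases le_total s t with hst | hst
    · rw [min_eq_left hst]; nlinarith
    · rw [min_eq_right hst]; nlinarith
  rw [abs_of_nonneg hnonneg, le_min_iff]
  unfold bridge
  constructor
  · nlinarith [min_le_left s t]
  · nlinarith [min_le_right s t]

theorem bridge_zero_right {s : ℝ} (hs : 0 ≤ s) : bridge s 0 = 0 := by
  simp [bridge, hs]

theorem bridge_one_right {s : ℝ} (hs : s ≤ 1) : bridge s 1 = 0 := by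
  simp [bridge, hs]

theorem tendsto_min_sub_cocompact :
    Tendsto (fun s : 𝕀 => min s.1 (1 - s.1)) (cocompact 𝕀) (𝓝 0) := by
  rw [Metric.tendsto_nhds]
  intro ε hε
  rw [hasBasis_cocompact.eventually_iff]
  refine ⟨Subtype.val ⁻¹' Set.Icc ε (1 - ε), ?_, fun s hs => ?_⟩
  · have hsub : Set.Icc ε (1 - ε) ⊆ Set.Ioo 0 1 := fun x hx =>
      ⟨hε.trans_le hx.1, by linarith [hx.2]⟩
    rw [Subtype.isCompact_iff, Subtype.image_preimage_coe, Set.inter_eq_right.mpr hsub]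
    exact isCompact_Icc
  · have hpos : 0 < min s.1 (1 - s.1) := lt_min s.2.1 (by linarith [s.2.2])
    rw [Real.dist_eq, sub_zero, abs_of_pos hpos, min_lt_iff]
    by_contra! h
    exact hs ⟨h.1, by linarith [h.2]⟩

/-- Clamping `t` to `[0, 1]` makes this a `C₀` function for every real `t`; it is `0` for
`t ∉ (0, 1)`. -/
noncomputable def bridgeC0 (t : ℝ) : C₀(𝕀, ℝ) where
  toFun s := bridge s (Set.projIcc 0 1 zero_le_one t)
  continuous_toFun := by unfold bridge; fun_prop
  zero_at_infty' := squeeze_zero_norm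
    (fun s => abs_bridge_le ⟨s.2.1.le, s.2.2.le⟩ (Set.projIcc 0 1 zero_le_one t).2)
    tendsto_min_sub_cocompact

theorem bridgeC0_apply {t : ℝ} (ht : t ∈ Set.Icc (0:ℝ) 1) (s : 𝕀) :
    bridgeC0 t s = bridge s t := by
  simp [bridgeC0, Set.projIcc_of_mem _ ht]

def bridgeSections : Set C₀(𝕀, ℝ) := {f | ∃ t : 𝕀, ∀ s, f s = bridge s t}

theorem bridgeC0_mem_span (t : ℝ) : bridgeC0 t ∈ Submodule.span ℝ bridgeSections := by
  by_cases ht0 : t ≤ 0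
  · convert Submodule.zero_mem _
    ext s
    simp [bridgeC0, Set.projIcc_of_le_left _ ht0, bridge_zero_right s.2.1.le]
  by_cases ht1 : 1 ≤ t
  · convert Submodule.zero_mem _
    ext s
    simp [bridgeC0, Set.projIcc_of_right_le _ ht1, bridge_one_right s.2.2.le]
  push Not at ht0 ht1
  exact Submodule.subset_span ⟨⟨t, ht0, ht1⟩, bridgeC0_apply ⟨ht0.le, ht1.le⟩⟩

noncomputable def interpolant (F : ℝ → ℝ) (n : ℕ) : C₀(𝕀, ℝ) :=
  ∑ j ∈ Ioo 0 n, (n * F (j / n)) •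
    ((2:ℝ) • bridgeC0 (j / n) - bridgeC0 (j / n - 1 / n) - bridgeC0 (j / n + 1 / n))

theorem interpolant_mem_span (F : ℝ → ℝ) (n : ℕ) :
    interpolant F n ∈ Submodule.span ℝ bridgeSections :=
  Submodule.sum_mem _ fun _ _ => Submodule.smul_mem _ _ <|
    Submodule.sub_mem _ (Submodule.sub_mem _ (Submodule.smul_mem _ _ (bridgeC0_mem_span _))
      (bridgeC0_mem_span _)) (bridgeC0_mem_span _)

theorem interpolant_apply {F : ℝ → ℝ} (hF0 : F 0 = 0) (hF1 : F 1 = 0) {n : ℕ} (hn : 0 < n)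
    (s : 𝕀) :
    interpolant F n s = ∑ j ∈ range (n + 1), (n * tent (1 / n) (j / n) s) * F (j / n) := by
  have hnR : (0:ℝ) < n := Nat.cast_pos.mpr hn
  have hgrid : ∀ j : ℕ, j ≤ n → (j / n : ℝ) ∈ Set.Icc (0:ℝ) 1 := fun j hj =>
    ⟨by positivity, (div_le_one hnR).mpr (Nat.cast_le.mpr hj)⟩
  rw [interpolant, ZeroAtInftyContinuousMap.sum_apply]
  refine sum_subset_zero_on_sdiff (fun j hj => mem_range.mpr (by simp at hj; omega))
    (fun j hj => ?_) (fun j hj => ?_)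
  · obtain ⟨hjn, hj⟩ := mem_sdiff.mp hj
    have : j = 0 ∨ j = n := by simp at hjn hj; omega
    rcases this with rfl | rfl
    · simp [hF0]
    · simp [div_self hnR.ne', hF1]
  · obtain ⟨hj0, hjn⟩ := mem_Ioo.mp hj
    have hleft : (j / n - 1 / n : ℝ) = (j - 1 : ℕ) / n := by
      rw [Nat.cast_sub (by omega), sub_div, Nat.cast_one]
    have hright : (j / n + 1 / n : ℝ) = (j + 1 : ℕ) / n := by push_cast; ring
    simp only [ZeroAtInftyContinuousMap.coe_smul,
      ZeroAtInftyContinuousMap.coe_sub, Pi.smul_apply, Pi.sub_apply, smul_eq_mul]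
    rw [bridgeC0_apply (hgrid j hjn.le), bridgeC0_apply (hleft ▸ hgrid _ (by omega)),
      bridgeC0_apply (hright ▸ hgrid _ hjn), two_mul_bridge_sub_sub (by positivity)]
    ring

theorem abs_sub_interpolant_le {F : ℝ → ℝ} (hF0 : F 0 = 0) (hF1 : F 1 = 0) {n : ℕ}
    (hn : 0 < n) {ε : ℝ} (hF : ∀ x y, |x - y| < 1 / (n:ℝ) → |F x - F y| ≤ ε)
    (s : 𝕀) :
    |F s - interpolant F n s| ≤ ε := by
  have hnR : (0:ℝ) < n := Nat.cast_pos.mpr hn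
  rw [interpolant_apply hF0 hF1 hn]
  refine abs_sub_sum_mul_le (fun j _ => by have := tent_nonneg (1 / n) (j / n) s; positivity)
    ?_ fun j _ hj => hF _ _ (abs_sub_lt_of_tent_ne_zero (right_ne_zero_of_mul hj))
  have hgrid : ∀ j : ℕ, (j / n : ℝ) = j * (1 / n) := fun j => by ring
  simp only [hgrid]
  rw [← mul_sum, sum_range_tent (by positivity) n s.2.1.le
    (by rw [mul_one_div_cancel hnR.ne']; exact s.2.2.le), mul_one_div_cancel hnR.ne']

theorem dense_span_bridgeSections :
    Dense (Submodule.span ℝ bridgeSections : Set C₀(𝕀, ℝ)) := by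
  rw [Metric.dense_iff]
  intro f r hr
  set F : ℝ → ℝ := Function.extend Subtype.val f 0
  have hF_out : ∀ x ∉ Set.Ioo (0:ℝ) 1, F x = 0 := fun x hx =>
    Function.extend_apply' _ _ _ fun ⟨s, hs⟩ => hx (hs ▸ s.2)
  have hF_in : ∀ s : 𝕀, F s = f s := Subtype.val_injective.extend_apply _ _
  have hF_supp : HasCompactSupport F := HasCompactSupport.intro isCompact_Icc fun x hx =>
    hF_out x fun h => hx (Set.Ioo_subset_Icc_self h)
  have hF_unif : UniformContinuous F :=
    hF_supp.uniformContinuous_of_continuous (f.continuous_extend_zero isOpen_Ioo)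
  obtain ⟨δ, hδ, hFδ⟩ := Metric.uniformContinuous_iff.mp hF_unif (r / 2) (by positivity)
  obtain ⟨m, hm⟩ := exists_nat_one_div_lt hδ
  refine ⟨interpolant F (m + 1), ?_, interpolant_mem_span F (m + 1)⟩
  have hpt : ∀ s : 𝕀, |f s - interpolant F (m + 1) s| ≤ r / 2 := fun s => by
    rw [← hF_in]
    refine abs_sub_interpolant_le (hF_out 0 (by simp)) (hF_out 1 (by simp)) m.succ_pos
      (fun x y hxy => (hFδ (?_ : dist x y < δ)).le) s
    rw [Real.dist_eq]
    push_cast at hxy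
    linarith
  rw [Metric.mem_ball, dist_comm, dist_eq_norm, ← ZeroAtInftyContinuousMap.norm_toBCF_eq_norm]
  exact ((BoundedContinuousFunction.norm_le (by positivity)).mpr hpt).trans_lt (half_lt_self hr)

end BrownianBridge

theorem stmt11_general (ν : SignedMeasure ↥(Set.Ioo (0:ℝ) 1))
    (hν : ∀ t : ↥(Set.Ioo (0:ℝ) 1),
      sintegral ν (fun s => min s.1 t.1 - s.1 * t.1) = 0) :
    ν = 0 ∧
    Dense (↑(Submodule.span ℝ
      {f : ZeroAtInftyContinuousMap ↥(Set.Ioo (0:ℝ) 1) ℝ |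
        ∃ t : ↥(Set.Ioo (0:ℝ) 1), ∀ s, f s = min s.1 t.1 - s.1 * t.1}) :
      Set (ZeroAtInftyContinuousMap ↥(Set.Ioo (0:ℝ) 1) ℝ)) := by
  have : LocallyCompactSpace ↥(Set.Ioo (0:ℝ) 1) := isOpen_Ioo.locallyCompactSpace
  refine ⟨ν.eq_zero_of_posPart_eq_negPart ?_, BrownianBridge.dense_span_bridgeSections⟩
  refine Measure.ext_of_dense_span_zeroAtInfty BrownianBridge.dense_span_bridgeSections ?_
  rintro f ⟨t, hf⟩
  simpa [funext hf, BrownianBridge.bridge, sintegral, sub_eq_zero] using hν t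

/-- if a finite signed regular Borel measure `ν` on `(0,1)` satisfies
`∫ (min{s,t} − st) dν(s) = 0` for every `t ∈ (0,1)`, then `ν = 0`; consequently the span of
the sections `K(·,t) = min{·,t} − (·)t` of the Brownian bridge kernel is dense in
`C₀((0,1))`. -/
theorem stmt11 (ν : SignedMeasure ↥(Set.Ioo (0:ℝ) 1))
    (hreg : ν.totalVariation.Regular)
    (hν : ∀ t : ↥(Set.Ioo (0:ℝ) 1),
      sintegral ν (fun s => min s.1 t.1 - s.1 * t.1) = 0) :
    ν = 0 ∧
    Dense (↑(Submodule.span ℝ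
      {f : ZeroAtInftyContinuousMap ↥(Set.Ioo (0:ℝ) 1) ℝ |
        ∃ t : ↥(Set.Ioo (0:ℝ) 1), ∀ s, f s = min s.1 t.1 - s.1 * t.1}) :
      Set (ZeroAtInftyContinuousMap ↥(Set.Ioo (0:ℝ) 1) ℝ)) :=
  stmt11_general ν hν
end

section
/- Assume s ≥ 1 and all eigenvalues λ_j are positive. Set φ := Σ_j λ_j^{s−1} a_j φ_j. Then φ ∈ L²_{ρ_X} with ‖φ‖_{L²_{ρ_X}} ≤ λ₁^{s−1} ‖h‖_{L²_{ρ_X}}, f_ρ = L_K φ, and the measure μ := φ dρ_X ∈ M(X) satisfies f_ρ(x) = ∫_X K(t,x) dμ(t) for ρ_X-almost every x and ‖μ‖ = ‖φ‖_{L¹_{ρ_X}} ≤ λ₁^{s−1} ‖h‖_{L²_{ρ_X}}. Consequently, for every λ > 0, D(λ, f_ρ) := λ‖μ‖ ≤ λ λ₁^{s−1} ‖h‖_{L²_{ρ_X}}. -/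
open MeasureTheory
open scoped RealInnerProductSpace ENNReal

/-!
Since `λ_j ≤ λ₁` and `s ≥ 1`, the coefficients `λ_j^{s-1} a_j` are dominated by `λ₁^{s-1} |a_j|`,
so by Parseval they define `φ ∈ L²` with `‖φ‖ ≤ λ₁^{s-1} ‖h‖`. A symmetric kernel gives a
symmetric operator, so the `j`-th coefficient of `L_K φ` is `λ_j` times that of `φ`, namely
`λ_j^s a_j`, which is that of `f_ρ`; hence `f_ρ = L_K φ`. The Jordan decomposition of `φ dρ_X` is
`(φ⁺ dρ_X, φ⁻ dρ_X)`, so its total variation is `‖φ‖_{L¹}`, which is at most `‖φ‖_{L²}` on a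
probability space.
-/

namespace Orthonormal

variable {ι 𝕜 E : Type*} [RCLike 𝕜] [NormedAddCommGroup E] [InnerProductSpace 𝕜 E]

theorem inner_left_of_hasSum {v : ι → E} (hv : Orthonormal 𝕜 v) {c : ι → 𝕜} {x : E}
    (hx : HasSum (fun i => c i • v i) x) (j : ι) : inner 𝕜 (v j) x = c j := by
  classical
  have h := hx.mapL (innerSL 𝕜 (v j))
  simp only [innerSL_apply_apply, inner_smul_right, orthonormal_iff_ite.mp hv, mul_ite,
    mul_one, mul_zero] at h
  refine h.unique ((hasSum_ite_eq j (c j)).congr_fun fun i => ?_)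
  rcases eq_or_ne j i with rfl | hji
  · simp
  · simp [hji, hji.symm]

end Orthonormal

namespace HilbertBasis

variable {ι E : Type*} [NormedAddCommGroup E] [InnerProductSpace ℝ E] (b : HilbertBasis ι ℝ E)

theorem hasSum_sq_of_hasSum {c : ι → ℝ} {x : E} (hx : HasSum (fun i => c i • b i) x) :
    HasSum (fun i => c i ^ 2) (‖x‖ ^ 2) := by
  have hc := b.orthonormal.inner_left_of_hasSum hx
  have hc' : ∀ i, ⟪x, b i⟫ = c i := fun i => by rw [real_inner_comm, hc]
  simpa only [hc, hc', ← sq, real_inner_self_eq_norm_sq] using b.hasSum_inner_mul_inner x x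

theorem eq_of_forall_inner_eq {x y : E} (h : ∀ i, ⟪b i, x⟫ = ⟪b i, y⟫) : x = y :=
  b.repr.injective <| lp.ext <| funext fun i => by
    simp only [b.repr_apply_apply, h]

theorem exists_hasSum_of_abs_le {a c : ι → ℝ} {h : E} (hh : HasSum (fun i => a i • b i) h)
    {M : ℝ} (hM : 0 ≤ M) (hca : ∀ i, |c i| ≤ M * |a i|) :
    ∃ x, HasSum (fun i => c i • b i) x ∧ ‖x‖ ≤ M * ‖h‖ := by
  have hsq : ∀ i, c i ^ 2 ≤ M ^ 2 * a i ^ 2 := fun i => by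
    simpa only [sq_abs, mul_pow] using pow_le_pow_left₀ (abs_nonneg _) (hca i) 2
  have ha := b.hasSum_sq_of_hasSum hh
  have hc : Memℓp c 2 := by
    rw [memℓp_gen_iff (by norm_num)]
    simpa only [ENNReal.toReal_ofNat, Real.rpow_two, Real.norm_eq_abs, sq_abs] using
      (ha.summable.mul_left (M ^ 2)).of_nonneg_of_le (fun i => sq_nonneg _) hsq
  have hx := b.hasSum_repr_symm ⟨c, hc⟩
  refine ⟨_, hx, ?_⟩
  have hle : ‖b.repr.symm ⟨c, hc⟩‖ ^ 2 ≤ (M * ‖h‖) ^ 2 := by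
    rw [mul_pow]
    exact hasSum_le hsq (b.hasSum_sq_of_hasSum hx) (ha.mul_left _)
  exact pow_le_pow_iff_left₀ (norm_nonneg _) (by positivity) two_ne_zero |>.mp hle

end HilbertBasis

section Measure

variable {X : Type*} [MeasurableSpace X] {μ : Measure X}

theorem tvNorm_withDensityᵥ {f : X → ℝ} (hf : Integrable f μ) :
    tvNorm (μ.withDensityᵥ f) = ∫ x, |f x| ∂μ := by
  obtain ⟨g, hg, hfg⟩ := hf.aestronglyMeasurable
  have habs : ∫ x, |f x| ∂μ = ∫ x, |g x| ∂μ := integral_congr_ae (hfg.fun_comp abs)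
  rw [WithDensityᵥEq.congr_ae hfg, habs]
  replace hf := hf.congr hfg
  have hJ := SignedMeasure.toJordanDecomposition_eq_of_eq_add_withDensity hg.measurable hf
    VectorMeasure.MutuallySingular.zero_left (zero_add _).symm
  have hpm : ∀ r : ℝ, ENNReal.ofReal r + ENNReal.ofReal (-r) = ‖r‖ₑ := fun r => by
    rcases le_total 0 r with hr | hr
    · simp [ENNReal.ofReal_of_nonpos (neg_nonpos.mpr hr), ← ofReal_norm, abs_of_nonneg hr]
    · simp [ENNReal.ofReal_of_nonpos hr, ← ofReal_norm, abs_of_nonpos hr]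
  rw [tvNorm, SignedMeasure.totalVariation, hJ]
  simp only [SignedMeasure.toJordanDecomposition_zero, JordanDecomposition.zero_posPart,
    JordanDecomposition.zero_negPart, zero_add, Measure.add_apply,
    withDensity_apply _ MeasurableSet.univ, Measure.restrict_univ]
  rw [← lintegral_add_left (by fun_prop), lintegral_congr fun x => hpm (g x),
    ← integral_norm_eq_lintegral_enorm hf.aestronglyMeasurable]
  simp only [Real.norm_eq_abs]

theorem integral_abs_le_norm_L2 [IsProbabilityMeasure μ] (f : Lp ℝ 2 μ) :
    ∫ x, |f x| ∂μ ≤ ‖f‖ := by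
  have h1 : ∫ x, |f x| ∂μ = (eLpNorm f 1 μ).toReal := by
    simp only [eLpNorm_one_eq_lintegral_enorm, ← Real.norm_eq_abs,
      integral_norm_eq_lintegral_enorm (Lp.aestronglyMeasurable f)]
  rw [h1, Lp.norm_def]
  exact ENNReal.toReal_mono (Lp.eLpNorm_ne_top f)
    (eLpNorm_le_eLpNorm_of_exponent_le one_le_two (Lp.aestronglyMeasurable f))

theorem MeasureTheory.L2.real_inner_eq_integral_mul (f g : Lp ℝ 2 μ) :
    ⟪f, g⟫ = ∫ x, f x * g x ∂μ := by
  simp only [L2.inner_def, Real.inner_apply]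

end Measure

theorem exists_abs_kernel_le {X : Type*} [TopologicalSpace X] [CompactSpace X]
    {K : X → X → ℝ} (hK : Continuous fun p : X × X => K p.1 p.2) :
    ∃ C, ∀ t x, |K t x| ≤ C := by
  obtain ⟨C, hC⟩ := isCompact_univ.exists_bound_of_continuousOn hK.continuousOn
  exact ⟨C, fun t x => hC (t, x) trivial⟩

/-- The function `L_K f` of the paper, defined pointwise. -/
noncomputable def kernelIntegral {X : Type*} [MeasurableSpace X] (μ : Measure X)
    (K : X → X → ℝ) (f : X → ℝ) (x : X) : ℝ :=
  ∫ t, K t x * f t ∂μ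

section IntegralOperator

variable {X : Type*} [MetricSpace X] [CompactSpace X] [MeasurableSpace X] [BorelSpace X]
  {μ : Measure X} {K : X → X → ℝ}

theorem integrable_kernel_mul (hK : Continuous fun p : X × X => K p.1 p.2) {f : X → ℝ}
    (hf : Integrable f μ) (x : X) : Integrable (fun t => K t x * f t) μ := by
  obtain ⟨C, hC⟩ := exists_abs_kernel_le hK
  refine (hf.abs.const_mul C).mono'
    ((hK.comp (continuous_id.prodMk continuous_const)).aestronglyMeasurable.mul
      hf.aestronglyMeasurable) (ae_of_all _ fun t => ?_)
  simp only [Real.norm_eq_abs, abs_mul]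
  exact mul_le_mul_of_nonneg_right (hC t x) (abs_nonneg _)

theorem continuous_kernelIntegral (hK : Continuous fun p : X × X => K p.1 p.2) {f : X → ℝ}
    (hf : Integrable f μ) : Continuous (kernelIntegral μ K f) := by
  obtain ⟨C, hC⟩ := exists_abs_kernel_le hK
  refine continuous_of_dominated (bound := fun t => C * |f t|)
    (fun x => (integrable_kernel_mul hK hf x).aestronglyMeasurable)
    (fun x => ae_of_all _ fun t => ?_) (hf.abs.const_mul C)
    (ae_of_all _ fun t => (hK.comp (continuous_const.prodMk continuous_id)).mul continuous_const)
  simp only [Real.norm_eq_abs, abs_mul]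
  exact mul_le_mul_of_nonneg_right (hC t x) (abs_nonneg _)

theorem memLp_kernelIntegral [IsFiniteMeasure μ] (hK : Continuous fun p : X × X => K p.1 p.2)
    {f : X → ℝ} (hf : Integrable f μ) (p : ℝ≥0∞) : MemLp (kernelIntegral μ K f) p μ := by
  have hcont := continuous_kernelIntegral hK hf
  obtain ⟨C, hC⟩ := isCompact_univ.exists_bound_of_continuousOn hcont.continuousOn
  exact MemLp.of_bound hcont.aestronglyMeasurable C (ae_of_all _ fun x => hC x trivial)

theorem integral_mul_kernelIntegral_comm [SFinite μ]
    (hK : Continuous fun p : X × X => K p.1 p.2) (hKsymm : ∀ x t, K x t = K t x)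
    {u f : X → ℝ} (hu : Integrable u μ) (hf : Integrable f μ) :
    ∫ x, u x * kernelIntegral μ K f x ∂μ = ∫ t, kernelIntegral μ K u t * f t ∂μ := by
  obtain ⟨C, hC⟩ := exists_abs_kernel_le hK
  have hprod : Integrable (fun z : X × X => u z.1 * (K z.2 z.1 * f z.2)) (μ.prod μ) := by
    refine ((hu.abs.mul_prod hf.abs).const_mul C).mono'
      (hu.aestronglyMeasurable.comp_fst.mul
        ((hK.comp (continuous_snd.prodMk continuous_fst)).aestronglyMeasurable.mul
          hf.aestronglyMeasurable.comp_snd)) (ae_of_all _ fun z => ?_)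
    simp only [Real.norm_eq_abs, abs_mul]
    calc |u z.1| * (|K z.2 z.1| * |f z.2|) ≤ |u z.1| * (C * |f z.2|) := by
          gcongr; exact hC _ _
      _ = C * (|u z.1| * |f z.2|) := by ring
  simp only [kernelIntegral, ← integral_const_mul, ← integral_mul_const]
  rw [integral_integral_swap hprod]
  congr 1 with t
  congr 1 with x
  rw [hKsymm t x]
  ring

theorem inner_toLp_kernelIntegral_of_eigen [IsFiniteMeasure μ]
    (hK : Continuous fun p : X × X => K p.1 p.2) (hKsymm : ∀ x t, K x t = K t x)
    {u : Lp ℝ 2 μ} {l : ℝ} (hu : ∀ᵐ x ∂μ, kernelIntegral μ K u x = l * u x) (f : Lp ℝ 2 μ) :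
    ⟪u, (memLp_kernelIntegral hK ((Lp.memLp f).integrable one_le_two) 2).toLp _⟫ =
      l * ⟪u, f⟫ := by
  have hint : ∀ g : Lp ℝ 2 μ, Integrable g μ := fun g => (Lp.memLp g).integrable one_le_two
  rw [L2.real_inner_eq_integral_mul, L2.real_inner_eq_integral_mul, ← integral_const_mul,
    integral_congr_ae ((MemLp.coeFn_toLp _).mono fun x hx => by rw [hx]),
    integral_mul_kernelIntegral_comm hK hKsymm (hint u) (hint f)]
  exact integral_congr_ae (hu.mono fun x hx => by simp only [hx, mul_assoc])

end IntegralOperator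

theorem stmt13_general {X : Type*} [MetricSpace X] [CompactSpace X]
    [MeasurableSpace X] [BorelSpace X]
    (ρX : Measure X) [IsProbabilityMeasure ρX]
    (K : X → X → ℝ) (hKcont : Continuous fun p : X × X => K p.1 p.2)
    (hKsymm : ∀ x t, K x t = K t x)
    (φ : ℕ → Lp ℝ 2 ρX) (hON : Orthonormal ℝ φ)
    (hcomplete : (Submodule.span ℝ (Set.range φ)).topologicalClosure = ⊤)
    (lam : ℕ → ℝ) (hpos : ∀ j, 0 < lam j) (hdecr : ∀ j, lam (j + 1) ≤ lam j)
    (heig : ∀ j, ∀ᵐ x ∂ρX, (∫ t, K t x * (φ j) t ∂ρX) = lam j * (φ j) x)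
    (s : ℝ) (hs : 1 ≤ s)
    (a : ℕ → ℝ) (h : Lp ℝ 2 ρX) (hh : HasSum (fun j => a j • φ j) h)
    (fρ : Lp ℝ 2 ρX) (hfρ : HasSum (fun j => (lam j ^ s * a j) • φ j) fρ) :
    ∃ ph : Lp ℝ 2 ρX,
      HasSum (fun j => (lam j ^ (s - 1) * a j) • φ j) ph ∧
      ‖ph‖ ≤ lam 0 ^ (s - 1) * ‖h‖ ∧
      (∀ᵐ x ∂ρX, fρ x = ∫ t, K t x * ph t ∂ρX) ∧
      tvNorm (ρX.withDensityᵥ ph) = ∫ x, |ph x| ∂ρX ∧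
      tvNorm (ρX.withDensityᵥ ph) ≤ lam 0 ^ (s - 1) * ‖h‖ ∧
      ∀ lamreg : ℝ, 0 < lamreg →
        lamreg * tvNorm (ρX.withDensityᵥ ph) ≤ lamreg * (lam 0 ^ (s - 1) * ‖h‖) := by
  let b : HilbertBasis ℕ ℝ (Lp ℝ 2 ρX) := HilbertBasis.mk hON hcomplete.ge
  have hb : ⇑b = φ := HilbertBasis.coe_mk _ _
  have hcoeff : ∀ j, |lam j ^ (s - 1) * a j| ≤ lam 0 ^ (s - 1) * |a j| := fun j => by
    rw [abs_mul, abs_of_pos (Real.rpow_pos_of_pos (hpos j) _)]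
    exact mul_le_mul_of_nonneg_right (Real.rpow_le_rpow (hpos j).le
      (antitone_nat_of_succ_le hdecr (Nat.zero_le j)) (by linarith)) (abs_nonneg _)
  obtain ⟨ph, hph, hnorm⟩ := b.exists_hasSum_of_abs_le (hb ▸ hh)
    (Real.rpow_nonneg (hpos 0).le _) hcoeff
  rw [hb] at hph
  have hphi : Integrable ph ρX := (Lp.memLp ph).integrable one_le_two
  have hL := memLp_kernelIntegral hKcont hphi 2
  have hfρ_eq : fρ = hL.toLp _ := b.eq_of_forall_inner_eq fun j => by
    rw [hb, inner_toLp_kernelIntegral_of_eigen hKcont hKsymm (heig j),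
      hON.inner_left_of_hasSum hfρ, hON.inner_left_of_hasSum hph, ← mul_assoc,
      ← Real.rpow_one_add' (hpos j).le (by linarith), add_sub_cancel]
  have htv := tvNorm_withDensityᵥ hphi
  have htv_le : tvNorm (ρX.withDensityᵥ ph) ≤ lam 0 ^ (s - 1) * ‖h‖ :=
    htv ▸ (integral_abs_le_norm_L2 ph).trans hnorm
  refine ⟨ph, hph, hnorm, ?_, htv, htv_le, fun r hr => mul_le_mul_of_nonneg_left htv_le hr.le⟩
  rw [hfρ_eq]
  exact hL.coeFn_toLp

/-- assume `s ≥ 1` and all eigenvalues positive. With `φ = Σ_j λ_j^{s−1} a_j φ_j`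
one has `φ ∈ L²_{ρ_X}`, `‖φ‖ ≤ λ₁^{s−1}‖h‖`, `f_ρ = L_K φ`, and the measure `μ = φ dρ_X`
satisfies `f_ρ(x) = ∫ K(t,x) dμ(t)` for `ρ_X`-a.e. `x` and `‖μ‖ = ‖φ‖_{L¹} ≤ λ₁^{s−1}‖h‖`;
consequently `D(λ,f_ρ) = λ‖μ‖ ≤ λ λ₁^{s−1} ‖h‖` for every `λ > 0`.
Here `(φⱼ)` is an orthonormal basis of `L²_{ρ_X}` of eigenfunctions of the integral
operator `L_K` of the continuous symmetric positive semidefinite kernel `K`, with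
eigenvalues `λ₁ ≥ λ₂ ≥ …` (`lam 0 = λ₁`), `f_ρ = Σ_j λ_j^s a_j φ_j` and `h = Σ_j a_j φ_j`. -/
theorem stmt13 {X : Type*} [MetricSpace X] [CompactSpace X]
    [MeasurableSpace X] [BorelSpace X]
    (ρX : Measure X) [IsProbabilityMeasure ρX]
    (K : X → X → ℝ) (hKcont : Continuous fun p : X × X => K p.1 p.2)
    (hKsymm : ∀ x t, K x t = K t x)
    (hKpsd : ∀ (n : ℕ) (z : Fin n → X) (c : Fin n → ℝ),
      0 ≤ ∑ i, ∑ j, c i * c j * K (z i) (z j))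
    (φ : ℕ → Lp ℝ 2 ρX) (hON : Orthonormal ℝ φ)
    (hcomplete : (Submodule.span ℝ (Set.range φ)).topologicalClosure = ⊤)
    (lam : ℕ → ℝ) (hpos : ∀ j, 0 < lam j) (hdecr : ∀ j, lam (j + 1) ≤ lam j)
    (heig : ∀ j, ∀ᵐ x ∂ρX, (∫ t, K t x * (φ j) t ∂ρX) = lam j * (φ j) x)
    (s : ℝ) (hs : 1 ≤ s)
    (a : ℕ → ℝ) (h : Lp ℝ 2 ρX) (hh : HasSum (fun j => a j • φ j) h)
    (fρ : Lp ℝ 2 ρX) (hfρ : HasSum (fun j => (lam j ^ s * a j) • φ j) fρ) :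
    ∃ ph : Lp ℝ 2 ρX,
      HasSum (fun j => (lam j ^ (s - 1) * a j) • φ j) ph ∧
      ‖ph‖ ≤ lam 0 ^ (s - 1) * ‖h‖ ∧
      (∀ᵐ x ∂ρX, fρ x = ∫ t, K t x * ph t ∂ρX) ∧
      tvNorm (ρX.withDensityᵥ ph) = ∫ x, |ph x| ∂ρX ∧
      tvNorm (ρX.withDensityᵥ ph) ≤ lam 0 ^ (s - 1) * ‖h‖ ∧
      ∀ lamreg : ℝ, 0 < lamreg →
        lamreg * tvNorm (ρX.withDensityᵥ ph) ≤ lamreg * (lam 0 ^ (s - 1) * ‖h‖) :=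
  stmt13_general ρX K hKcont hKsymm φ hON hcomplete lam hpos hdecr heig s hs a h hh fρ hfρ
end

section
/- Assume 0 < s < 1 and all eigenvalues λ_j are positive with λ_j → 0. Then for every λ > 0 there exists φ ∈ L²_{ρ_X} (possibly φ = 0) such that, with g := L_K φ and μ := φ dρ_X ∈ M(X), one has ‖g − f_ρ‖²_{L²_{ρ_X}} + λ‖μ‖ ≤ (‖h‖_{L²_{ρ_X}} + ‖h‖²_{L²_{ρ_X}}) λ^{2s/(1+s)}. In particular, inf over μ ∈ M(X) of [‖f_μ − f_ρ‖²_{L²_{ρ_X}} + λ‖μ‖] is at most (‖h‖_{L²_{ρ_X}} + ‖h‖²_{L²_{ρ_X}}) λ^{2s/(1+s)}, where f_μ(x) := ∫_X K(t,x) dμ(t). -/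
/-!
Spectral cut-off. Choose the threshold `t` with `t ^ (1 + s) = λ` and keep the finitely many
eigendirections with `λ_j ≥ t`: `φ = Σ_{λ_j ≥ t} λ_j ^ (s - 1) a_j φ_j`, so that `L_K φ` is the
corresponding truncation of `f_ρ`. By Parseval the discarded tail of `f_ρ` has norm at most
`t ^ s ‖h‖`, while `‖φ dρ_X‖ = ‖φ‖_{L¹} ≤ ‖φ‖_{L²} ≤ t ^ (s - 1) ‖h‖`; since `λ = t ^ (1 + s)`,
both terms are at most `t ^ (2 s) = λ ^ (2 s / (1 + s))` times `‖h‖ ^ 2`, resp. `‖h‖`.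
-/

open MeasureTheory

theorem finite_setOf_le_of_tendsto_zero {lam : ℕ → ℝ}
    (hlim : Filter.Tendsto lam Filter.atTop (nhds 0)) {t : ℝ} (ht : 0 < t) :
    {j | t ≤ lam j}.Finite := by
  rw [← Nat.cofinite_eq_atTop] at hlim
  simpa only [not_lt] using Filter.eventually_cofinite.1 (hlim.eventually (gt_mem_nhds ht))

theorem sq_rpow_mul_add_rpow_mul_rpow_mul_eq {s t : ℝ} (ht : 0 < t) (hs : 1 + s ≠ 0) (x : ℝ) :
    (t ^ s * x) ^ 2 + t ^ (1 + s) * (t ^ (s - 1) * x)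
      = (x + x ^ 2) * (t ^ (1 + s)) ^ (2 * s / (1 + s)) := by
  have h2s : (t ^ s) ^ 2 = t ^ (2 * s) := by
    rw [← Real.rpow_natCast, ← Real.rpow_mul ht.le]; ring_nf
  have h1s : t ^ (1 + s) * t ^ (s - 1) = t ^ (2 * s) := by
    rw [← Real.rpow_add ht]; ring_nf
  have hexp : (t ^ (1 + s)) ^ (2 * s / (1 + s)) = t ^ (2 * s) := by
    rw [← Real.rpow_mul ht.le]; congr 1; field_simp
  rw [hexp]
  linear_combination x ^ 2 * h2s + x * h1s

section Orthonormal

variable {ι E : Type*} [NormedAddCommGroup E] [InnerProductSpace ℝ E] {φ : ι → E}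

theorem Orthonormal.inner_eq_of_hasSum (hON : Orthonormal ℝ φ) {c : ι → ℝ}
    {v : E} (hv : HasSum (fun j => c j • φ j) v) (k : ι) : inner ℝ (φ k) v = c k := by
  have hk := hasSum_single (f := fun j => inner ℝ (φ k) (c j • φ j)) k fun j hj => by
    simp [inner_smul_right, hON.2 hj.symm]
  simpa [inner_smul_right, real_inner_self_eq_norm_sq, hON.1 k] using
    (hv.mapL (innerSL ℝ (φ k))).unique hk

theorem Orthonormal.hasSum_sq_of_hasSum (hON : Orthonormal ℝ φ) {c : ι → ℝ} {v : E}
    (hv : HasSum (fun j => c j • φ j) v) : HasSum (fun j => c j ^ 2) (‖v‖ ^ 2) := by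
  have hc : ∀ j, inner ℝ v (φ j) = c j := fun j => by
    rw [real_inner_comm]; exact hON.inner_eq_of_hasSum hv j
  have h := hv.mapL (innerSL ℝ v)
  simp only [innerSL_apply_apply, inner_smul_right, real_inner_self_eq_norm_sq, hc] at h
  simpa [sq] using h

theorem Orthonormal.norm_le_of_hasSum_of_abs_le (hON : Orthonormal ℝ φ) {a b : ι → ℝ} {v w : E}
    (hv : HasSum (fun j => a j • φ j) v) (hw : HasSum (fun j => b j • φ j) w) {M : ℝ}
    (hM : 0 ≤ M) (hba : ∀ j, |b j| ≤ M * |a j|) : ‖w‖ ≤ M * ‖v‖ := by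
  have hsq : ‖w‖ ^ 2 ≤ (M * ‖v‖) ^ 2 := by
    rw [mul_pow]
    refine hasSum_le (fun j => ?_) (hON.hasSum_sq_of_hasSum hw)
      ((hON.hasSum_sq_of_hasSum hv).mul_left (M ^ 2))
    rw [← sq_abs (b j), ← sq_abs (a j), ← mul_pow]
    exact pow_le_pow_left₀ (abs_nonneg _) (hba j) 2
  exact (sq_le_sq₀ (norm_nonneg _) (by positivity)).mp hsq

theorem hasSum_ite_smul_finset [DecidableEq ι] (S : Finset ι) (c : ι → ℝ) (φ : ι → E) :
    HasSum (fun j => (if j ∈ S then c j else 0) • φ j) (∑ j ∈ S, c j • φ j) := by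
  convert hasSum_sum_of_ne_finset_zero (L := .unconditional ι) (s := S)
    (f := fun j => (if j ∈ S then c j else 0) • φ j) (fun j hj => by simp [hj]) using 1
  exact Finset.sum_congr rfl fun j hj => by simp [hj]

theorem Orthonormal.norm_finsetSum_le (hON : Orthonormal ℝ φ) {a b : ι → ℝ} {v : E}
    (hv : HasSum (fun j => a j • φ j) v) (S : Finset ι) {M : ℝ} (hM : 0 ≤ M)
    (hba : ∀ j ∈ S, |b j| ≤ M * |a j|) : ‖∑ j ∈ S, b j • φ j‖ ≤ M * ‖v‖ := by
  classical
  refine hON.norm_le_of_hasSum_of_abs_le hv (hasSum_ite_smul_finset S b φ) hM fun j => ?_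
  split_ifs with hj
  · exact hba j hj
  · simpa using mul_nonneg hM (abs_nonneg (a j))

theorem Orthonormal.norm_sub_finsetSum_le (hON : Orthonormal ℝ φ) {a b : ι → ℝ} {v w : E}
    (hv : HasSum (fun j => a j • φ j) v) (hw : HasSum (fun j => b j • φ j) w) (S : Finset ι)
    {M : ℝ} (hM : 0 ≤ M) (hba : ∀ j ∉ S, |b j| ≤ M * |a j|) :
    ‖w - ∑ j ∈ S, b j • φ j‖ ≤ M * ‖v‖ := by
  classical
  have htail : HasSum (fun j => (if j ∈ S then 0 else b j) • φ j) (w - ∑ j ∈ S, b j • φ j) := by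
    convert hw.sub (hasSum_ite_smul_finset S b φ) using 1
    funext j
    split_ifs <;> simp
  refine hON.norm_le_of_hasSum_of_abs_le hv htail hM fun j => ?_
  split_ifs with hj
  · simpa using mul_nonneg hM (abs_nonneg (a j))
  · exact hba j hj

theorem Orthonormal.norm_sum_rpow_mul_smul_le (hON : Orthonormal ℝ φ) {a lam : ι → ℝ} {v : E}
    (hv : HasSum (fun j => a j • φ j) v) {s t : ℝ} (hs : s ≤ 0) (ht : 0 < t) (S : Finset ι)
    (hS : ∀ j ∈ S, t ≤ lam j) : ‖∑ j ∈ S, (lam j ^ s * a j) • φ j‖ ≤ t ^ s * ‖v‖ := by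
  refine hON.norm_finsetSum_le hv S (by positivity) fun j hj => ?_
  rw [abs_mul, abs_of_nonneg (Real.rpow_nonneg (ht.le.trans (hS j hj)) _)]
  exact mul_le_mul_of_nonneg_right (Real.rpow_le_rpow_of_nonpos ht (hS j hj) hs) (abs_nonneg _)

theorem Orthonormal.norm_sub_sum_rpow_mul_smul_le (hON : Orthonormal ℝ φ) {a lam : ι → ℝ}
    {s t : ℝ} {v w : E} (hv : HasSum (fun j => a j • φ j) v)
    (hw : HasSum (fun j => (lam j ^ s * a j) • φ j) w) (hlam : ∀ j, 0 ≤ lam j) (hs : 0 ≤ s)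
    (ht : 0 ≤ t) (S : Finset ι) (hS : ∀ j ∉ S, lam j ≤ t) :
    ‖w - ∑ j ∈ S, (lam j ^ s * a j) • φ j‖ ≤ t ^ s * ‖v‖ := by
  refine hON.norm_sub_finsetSum_le hv hw S (by positivity) fun j hj => ?_
  rw [abs_mul, abs_of_nonneg (Real.rpow_nonneg (hlam j) _)]
  exact mul_le_mul_of_nonneg_right (Real.rpow_le_rpow (hlam j) (hS j hj) hs) (abs_nonneg _)

end Orthonormal

section Measure

open scoped ENNReal

variable {X : Type*} [MeasurableSpace X] {ρ : Measure X}

theorem tvNorm_withDensityᵥ_le {f : X → ℝ} (hf : Integrable f ρ) :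
    tvNorm (ρ.withDensityᵥ f) ≤ (eLpNorm f 1 ρ).toReal := by
  have hvar : SignedMeasure.totalVariation (ρ.withDensityᵥ f) ≤ ρ.withDensity fun x => ‖f x‖ₑ := by
    rw [SignedMeasure.totalVariation_eq_variation]
    refine VectorMeasure.variation_le_of_forall_enorm_le fun E hE => ?_
    rw [withDensityᵥ_apply hf hE, withDensity_apply _ hE]
    exact enorm_integral_le_lintegral_enorm _
  refine ENNReal.toReal_mono (memLp_one_iff_integrable.2 hf).eLpNorm_ne_top ?_
  simpa [eLpNorm_one_eq_lintegral_enorm] using hvar Set.univ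

theorem MeasureTheory.Lp.tvNorm_withDensityᵥ_le_norm [IsProbabilityMeasure ρ] {p : ℝ≥0∞}
    [Fact (1 ≤ p)] (f : Lp ℝ p ρ) : tvNorm (ρ.withDensityᵥ f) ≤ ‖f‖ :=
  (tvNorm_withDensityᵥ_le ((Lp.memLp f).integrable Fact.out)).trans <| by
    rw [Lp.norm_def]
    exact ENNReal.toReal_mono (Lp.eLpNorm_ne_top f)
      (eLpNorm_le_eLpNorm_of_exponent_le Fact.out (Lp.aestronglyMeasurable f))

theorem MeasureTheory.Lp.ae_eq_finsetSum_smul {ι : Type*} {p : ℝ≥0∞} [Fact (1 ≤ p)] (S : Finset ι)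
    (c : ι → ℝ) (φ : ι → Lp ℝ p ρ) :
    ∀ᵐ x ∂ρ, (∑ j ∈ S, c j • φ j) x = ∑ j ∈ S, c j * φ j x := by
  filter_upwards [Lp.coeFn_fun_finsetSum S (fun j => c j • φ j),
    (Filter.eventually_all_finset S).2 fun j _ => Lp.coeFn_smul (c j) (φ j)] with x hx hsmul
  simp_all

theorem ae_integral_kernel_mul_finsetSum {ι : Type*} {p : ℝ≥0∞} [Fact (1 ≤ p)]
    (K : X → X → ℝ) (φ : ι → Lp ℝ p ρ) (lam : ι → ℝ) (S : Finset ι) (c : ι → ℝ)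
    (hint : ∀ x, ∀ j ∈ S, Integrable (fun t => K t x * φ j t) ρ)
    (heig : ∀ j ∈ S, ∀ᵐ x ∂ρ, ∫ t, K t x * φ j t ∂ρ = lam j * φ j x) :
    ∀ᵐ x ∂ρ, ∫ t, K t x * (∑ j ∈ S, c j • φ j) t ∂ρ = (∑ j ∈ S, (c j * lam j) • φ j) x := by
  filter_upwards [Lp.ae_eq_finsetSum_smul S (fun j => c j * lam j) φ,
    (Filter.eventually_all_finset S).2 heig] with x hx heigx
  calc ∫ t, K t x * (∑ j ∈ S, c j • φ j) t ∂ρ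
      = ∫ t, ∑ j ∈ S, c j * (K t x * φ j t) ∂ρ := by
        refine integral_congr_ae ?_
        filter_upwards [Lp.ae_eq_finsetSum_smul S c φ] with t ht
        rw [ht, Finset.mul_sum]
        exact Finset.sum_congr rfl fun j _ => by ring
    _ = ∑ j ∈ S, c j * (lam j * φ j x) := by
        rw [integral_finsetSum _ fun j hj => (hint x j hj).const_mul (c j)]
        exact Finset.sum_congr rfl fun j hj => by rw [integral_const_mul, heigx j hj]
    _ = _ := by
        rw [hx]
        exact Finset.sum_congr rfl fun j _ => by ring

theorem MeasureTheory.Integrable.continuous_mul_of_compactSpace {Y : Type*} [TopologicalSpace Y]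
    [CompactSpace Y] [MeasurableSpace Y] [OpensMeasurableSpace Y] {μ : Measure Y}
    {k f : Y → ℝ} (hk : Continuous k) (hf : Integrable f μ) :
    Integrable (fun y => k y * f y) μ :=
  integrableOn_univ.1 <| hf.integrableOn.continuousOn_mul_of_subset hk.continuousOn
    isCompact_univ MeasurableSet.univ subset_rfl

end Measure

theorem stmt14_general {X : Type*} [MetricSpace X] [CompactSpace X]
    [MeasurableSpace X] [BorelSpace X]
    (ρX : Measure X) [IsProbabilityMeasure ρX]
    (K : X → X → ℝ) (hKcont : Continuous fun p : X × X => K p.1 p.2)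
    (φ : ℕ → Lp ℝ 2 ρX) (hON : Orthonormal ℝ φ)
    (lam : ℕ → ℝ) (hpos : ∀ j, 0 < lam j)
    (hlim : Filter.Tendsto lam Filter.atTop (nhds 0))
    (heig : ∀ j, ∀ᵐ x ∂ρX, (∫ t, K t x * (φ j) t ∂ρX) = lam j * (φ j) x)
    (s : ℝ) (hs0 : 0 < s) (hs1 : s < 1)
    (a : ℕ → ℝ) (h : Lp ℝ 2 ρX) (hh : HasSum (fun j => a j • φ j) h)
    (fρ : Lp ℝ 2 ρX) (hfρ : HasSum (fun j => (lam j ^ s * a j) • φ j) fρ) :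
    ∀ lamreg : ℝ, 0 < lamreg →
      ∃ ph g : Lp ℝ 2 ρX,
        (∀ᵐ x ∂ρX, g x = ∫ t, K t x * ph t ∂ρX) ∧
        ‖g - fρ‖ ^ 2 + lamreg * tvNorm (ρX.withDensityᵥ ph)
          ≤ (‖h‖ + ‖h‖ ^ 2) * lamreg ^ (2 * s / (1 + s)) := by
  intro lamreg hlam
  obtain ⟨t, ht, rfl⟩ : ∃ t, 0 < t ∧ t ^ (1 + s) = lamreg :=
    ⟨lamreg ^ (1 + s)⁻¹, by positivity, Real.rpow_inv_rpow hlam.le (by linarith)⟩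
  obtain ⟨S, hS⟩ : ∃ S : Finset ℕ, ∀ j, j ∈ S ↔ t ≤ lam j :=
    ⟨(finite_setOf_le_of_tendsto_zero hlim ht).toFinset, by simp⟩
  have hcoef : ∑ j ∈ S, (lam j ^ (s - 1) * a j * lam j) • φ j
      = ∑ j ∈ S, (lam j ^ s * a j) • φ j := Finset.sum_congr rfl fun j _ => by
    rw [Real.rpow_sub_one (hpos j).ne']
    field_simp [(hpos j).ne']
  refine ⟨∑ j ∈ S, (lam j ^ (s - 1) * a j) • φ j, ∑ j ∈ S, (lam j ^ s * a j) • φ j, ?_, ?_⟩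
  · have hint : ∀ x, ∀ j ∈ S, Integrable (fun t => K t x * φ j t) ρX := fun x j _ =>
      ((Lp.memLp (φ j)).integrable one_le_two).continuous_mul_of_compactSpace
        (hKcont.comp (continuous_id.prodMk continuous_const))
    filter_upwards [ae_integral_kernel_mul_finsetSum K φ lam S _ hint fun j _ => heig j]
      with x hx
    rw [hx, hcoef]
  · calc _ ≤ (t ^ s * ‖h‖) ^ 2 + t ^ (1 + s) * (t ^ (s - 1) * ‖h‖) := by
          gcongr
          · rw [norm_sub_rev]
            exact hON.norm_sub_sum_rpow_mul_smul_le hh hfρ (fun j => (hpos j).le) hs0.le ht.le S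
              fun j hj => (not_le.1 ((hS j).not.1 hj)).le
          · exact (Lp.tvNorm_withDensityᵥ_le_norm _).trans <|
              hON.norm_sum_rpow_mul_smul_le hh (by linarith) ht S fun j hj => (hS j).1 hj
      _ = _ := sq_rpow_mul_add_rpow_mul_rpow_mul_eq ht (by linarith) ‖h‖

/-- assume `0 < s < 1` and all eigenvalues positive with `λ_j → 0`. Then for
every `λ > 0` there is `φ ∈ L²_{ρ_X}` such that, with `g = L_K φ` and `μ = φ dρ_X`,
`‖g − f_ρ‖² + λ‖μ‖ ≤ (‖h‖ + ‖h‖²) λ^{2s/(1+s)}`; in particular the infimum over `μ ∈ M(X)`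
of `‖f_μ − f_ρ‖² + λ‖μ‖` is at most `(‖h‖ + ‖h‖²) λ^{2s/(1+s)}`.
Here `(φⱼ)` is an orthonormal basis of `L²_{ρ_X}` of eigenfunctions of the integral
operator `L_K` of the continuous symmetric positive semidefinite kernel `K`, with
eigenvalues `λ₁ ≥ λ₂ ≥ … > 0`, `f_ρ = Σ_j λ_j^s a_j φ_j` and `h = Σ_j a_j φ_j`. -/
theorem stmt14 {X : Type*} [MetricSpace X] [CompactSpace X]
    [MeasurableSpace X] [BorelSpace X]
    (ρX : Measure X) [IsProbabilityMeasure ρX]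
    (K : X → X → ℝ) (hKcont : Continuous fun p : X × X => K p.1 p.2)
    (hKsymm : ∀ x t, K x t = K t x)
    (hKpsd : ∀ (n : ℕ) (z : Fin n → X) (c : Fin n → ℝ),
      0 ≤ ∑ i, ∑ j, c i * c j * K (z i) (z j))
    (φ : ℕ → Lp ℝ 2 ρX) (hON : Orthonormal ℝ φ)
    (hcomplete : (Submodule.span ℝ (Set.range φ)).topologicalClosure = ⊤)
    (lam : ℕ → ℝ) (hpos : ∀ j, 0 < lam j) (hdecr : ∀ j, lam (j + 1) ≤ lam j)
    (hlim : Filter.Tendsto lam Filter.atTop (nhds 0))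
    (heig : ∀ j, ∀ᵐ x ∂ρX, (∫ t, K t x * (φ j) t ∂ρX) = lam j * (φ j) x)
    (s : ℝ) (hs0 : 0 < s) (hs1 : s < 1)
    (a : ℕ → ℝ) (h : Lp ℝ 2 ρX) (hh : HasSum (fun j => a j • φ j) h)
    (fρ : Lp ℝ 2 ρX) (hfρ : HasSum (fun j => (lam j ^ s * a j) • φ j) fρ) :
    ∀ lamreg : ℝ, 0 < lamreg →
      ∃ ph g : Lp ℝ 2 ρX,
        (∀ᵐ x ∂ρX, g x = ∫ t, K t x * ph t ∂ρX) ∧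
        ‖g - fρ‖ ^ 2 + lamreg * tvNorm (ρX.withDensityᵥ ph)
          ≤ (‖h‖ + ‖h‖ ^ 2) * lamreg ^ (2 * s / (1 + s)) :=
  stmt14_general ρX K hKcont φ hON lam hpos hlim heig s hs0 hs1 a h hh fρ hfρ
end
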